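/- arXiv:1207.1056 — 2 statements merged into one kernel-verified Lean document; each statement's English description precedes it below -/
import Mathlib

section
/- For every p ≥ 1 and b > 0 there exists a constant C > 0 depending only on p and b such that for every n ≥ 1, E(∫_{−b}^{b} |F̂(x) − F(x)|^p dx) ≤ C n^{−p/2}, where F̂(x) = (1/n)∑_{i=1}^n 1{X_i ≤ x} is the empirical distribution function. -/
open MeasureTheory ProbabilityTheory Finset

section Helpers

variable {Ω : Type} [MeasurableSpace Ω] {P : Measure Ω}

private lemma my_integrable [IsFiniteMeasure P] {f : Ω → ℝ} (hf : Measurable f) {M : ℝ}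
    (h : ∀ ω, |f ω| ≤ M) : Integrable f P :=
  (integrable_const M).mono' hf.aestronglyMeasurable
    (Filter.Eventually.of_forall fun ω => by simpa [Real.norm_eq_abs] using h ω)

private lemma my_abs_integral [IsProbabilityMeasure P] {f : Ω → ℝ} {M : ℝ}
    (h : ∀ ω, |f ω| ≤ M) : |∫ ω, f ω ∂P| ≤ M := by
  have := norm_integral_le_of_norm_le_const (μ := P) (f := f) (C := M)
    (Filter.Eventually.of_forall fun ω => by simpa [Real.norm_eq_abs] using h ω)
  simpa [Real.norm_eq_abs] using this

private lemma my_pow_le {x : ℝ} (hx : 0 ≤ x) {m M : ℕ} (h : m ≤ M) : x ^ m ≤ 1 + x ^ M := by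
  rcases le_total x 1 with hx1 | hx1
  · have h1 : x ^ m ≤ 1 := pow_le_one₀ hx hx1
    have h2 : (0:ℝ) ≤ x ^ M := pow_nonneg hx M
    linarith
  · have h1 : x ^ m ≤ x ^ M := pow_le_pow_right₀ hx1 h
    linarith

/-- Even moment bound for sums of independent, centered, bounded random variables. -/
private lemma moment_bound (k : ℕ) : ∃ B : ℝ, 1 ≤ B ∧
    ∀ (Ω : Type) (mΩ : MeasurableSpace Ω) (P : Measure Ω), IsProbabilityMeasure P →
    ∀ (n : ℕ) (Y : Fin n → Ω → ℝ), (∀ i, Measurable (Y i)) →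
    iIndepFun Y P →
    (∀ i ω, |Y i ω| ≤ 1) → (∀ i, ∫ ω, Y i ω ∂P = 0) →
    ∀ s : Finset (Fin n), ∫ ω, (∑ i ∈ s, Y i ω) ^ (2 * k) ∂P ≤ B * (s.card : ℝ) ^ k := by
  induction k with
  | zero =>
    exact ⟨1, le_refl 1, fun Ω mΩ P hP n Y hm hi hb hz s => by simp⟩
  | succ k IH =>
    obtain ⟨B, hB1, hB⟩ := IH
    set m : ℕ := 2 * (k + 1) with hm_def
    refine ⟨2 ^ m * (1 + B), ?_, ?_⟩
    · have h2 : (1:ℝ) ≤ 2 ^ m := one_le_pow₀ (by norm_num)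
      nlinarith
    intro Ω mΩ P hP n Y hmeas hindep hbd hmean s
    classical
    induction s using Finset.induction_on with
    | empty =>
      have : (2 * (k+1)) ≠ 0 := by omega
      simp [this, zero_pow (Nat.succ_ne_zero k)]
    | @insert i s hi IHs =>
      set T : Ω → ℝ := fun ω => ∑ j ∈ s, Y j ω with hT_def
      set Z : Ω → ℝ := Y i with hZ_def
      set c : ℝ := (s.card : ℝ) with hc_def
      have hc0 : (0:ℝ) ≤ c := Nat.cast_nonneg _
      have hTmeas : Measurable T := Finset.measurable_sum s fun j _ => hmeas j
      have hTbd : ∀ ω, |T ω| ≤ c := by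
        intro ω
        calc |T ω| ≤ ∑ j ∈ s, |Y j ω| := Finset.abs_sum_le_sum_abs _ _
          _ ≤ ∑ j ∈ s, 1 := Finset.sum_le_sum fun j _ => hbd j ω
          _ = c := by simp [hc_def]
      have hTpow_bd : ∀ (a : ℕ) ω, |T ω ^ a| ≤ c ^ a := fun a ω => by
        rw [abs_pow]; exact pow_le_pow_left₀ (abs_nonneg _) (hTbd ω) a
      have hZpow_bd : ∀ (a : ℕ) ω, |Z ω ^ a| ≤ 1 := fun a ω => by
        rw [abs_pow]; exact pow_le_one₀ (abs_nonneg _) (hbd i ω)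
      have hTint : ∀ a : ℕ, Integrable (fun ω => T ω ^ a) P :=
        fun a => my_integrable (hTmeas.pow_const a) (hTpow_bd a)
      have hZint : ∀ a : ℕ, Integrable (fun ω => Z ω ^ a) P :=
        fun a => my_integrable ((hmeas i).pow_const a) (hZpow_bd a)
      have hint : ∀ (aZ aT : ℕ) (r : ℝ), Integrable (fun ω => Z ω ^ aZ * T ω ^ aT * r) P := by
        intro aZ aT r
        refine my_integrable ((((hmeas i).pow_const aZ).mul (hTmeas.pow_const aT)).mul_const r)
          (M := c ^ aT * |r|) fun ω => ?_
        rw [abs_mul, abs_mul]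
        have h1 := hZpow_bd aZ ω
        have h2 := hTpow_bd aT ω
        have h3 : (0:ℝ) ≤ |r| := abs_nonneg r
        have h4 : (0:ℝ) ≤ |T ω ^ aT| := abs_nonneg _
        have h5 : |Z ω ^ aZ| * |T ω ^ aT| ≤ 1 * (c ^ aT) :=
          mul_le_mul h1 h2 h4 zero_le_one
        rw [one_mul] at h5
        exact mul_le_mul_of_nonneg_right h5 h3
      have hZT : IndepFun Z T P := by
        have h0 := (hindep.indepFun_finsetSum_of_notMem hmeas hi).symm
        have he : (∑ j ∈ s, Y j) = T := by
          funext ω; simp [hT_def, Finset.sum_apply]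
        rwa [he] at h0
      have hmulint : ∀ aZ aT : ℕ,
          ∫ ω, Z ω ^ aZ * T ω ^ aT ∂P = (∫ ω, Z ω ^ aZ ∂P) * ∫ ω, T ω ^ aT ∂P := by
        intro aZ aT
        have hind2 : IndepFun (fun ω => Z ω ^ aZ) (fun ω => T ω ^ aT) P :=
          hZT.comp (measurable_id.pow_const aZ) (measurable_id.pow_const aT)
        exact IndepFun.integral_mul_eq_mul_integral hind2 ((hmeas i).pow_const aZ).aestronglyMeasurable
          (hTmeas.pow_const aT).aestronglyMeasurable
      have hZ_le : ∀ a : ℕ, |∫ ω, Z ω ^ a ∂P| ≤ 1 := fun a => my_abs_integral (hZpow_bd a)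
      have hT2k : ∫ ω, T ω ^ (2 * k) ∂P ≤ B * c ^ k :=
        hB Ω mΩ P hP n Y hmeas hindep hbd hmean s
      have hT_le : ∀ a : ℕ, a ≤ 2 * k → |∫ ω, T ω ^ a ∂P| ≤ 1 + B * c ^ k := by
        intro a ha
        have habs : |∫ ω, T ω ^ a ∂P| ≤ ∫ ω, |T ω ^ a| ∂P := by
          simpa [Real.norm_eq_abs] using
            norm_integral_le_integral_norm (μ := P) (f := fun ω => T ω ^ a)
        have hptw : ∀ ω, |T ω ^ a| ≤ 1 + T ω ^ (2 * k) := by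
          intro ω
          have h1 : |T ω| ^ a ≤ 1 + |T ω| ^ (2 * k) := my_pow_le (abs_nonneg _) ha
          have h2 : |T ω| ^ (2 * k) = T ω ^ (2 * k) := by
            rw [pow_abs, abs_of_nonneg (Even.pow_nonneg (even_two_mul k) _)]
          rw [abs_pow]
          rw [h2] at h1
          exact h1
        calc |∫ ω, T ω ^ a ∂P| ≤ ∫ ω, |T ω ^ a| ∂P := habs
          _ ≤ ∫ ω, (1 + T ω ^ (2 * k)) ∂P := by
              refine integral_mono ?_ ((integrable_const 1).add (hTint (2 * k))) hptw
              exact my_integrable (hTmeas.pow_const a).abs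
                (M := c ^ a) fun ω => by rw [abs_abs]; exact hTpow_bd a ω
          _ = 1 + ∫ ω, T ω ^ (2 * k) ∂P := by
              rw [integral_add (integrable_const 1) (hTint (2 * k))]; simp
          _ ≤ 1 + B * c ^ k := by linarith
      -- expand
      have key : ∫ ω, (∑ j ∈ insert i s, Y j ω) ^ m ∂P
          = ∑ j ∈ range (m + 1),
              (∫ ω, Z ω ^ j ∂P) * (∫ ω, T ω ^ (m - j) ∂P) * (m.choose j : ℝ) := by
        have h1 : ∀ ω, (∑ j ∈ insert i s, Y j ω) ^ m
            = ∑ j ∈ range (m + 1), Z ω ^ j * T ω ^ (m - j) * (m.choose j : ℝ) := by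
          intro ω
          rw [Finset.sum_insert hi, add_pow]
        calc ∫ ω, (∑ j ∈ insert i s, Y j ω) ^ m ∂P
            = ∫ ω, ∑ j ∈ range (m + 1), Z ω ^ j * T ω ^ (m - j) * (m.choose j : ℝ) ∂P := by
              simp_rw [h1]
          _ = ∑ j ∈ range (m + 1), ∫ ω, Z ω ^ j * T ω ^ (m - j) * (m.choose j : ℝ) ∂P :=
              integral_finset_sum _ (fun j _ => hint j (m - j) _)
          _ = ∑ j ∈ range (m + 1),
              (∫ ω, Z ω ^ j ∂P) * (∫ ω, T ω ^ (m - j) ∂P) * (m.choose j : ℝ) := by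
              refine Finset.sum_congr rfl fun j _ => ?_
              rw [integral_mul_const, hmulint j (m - j)]
      -- split the sum
      have hsplit : range (m + 1) = insert 0 (insert 1 (Finset.Ico 2 (m + 1))) := by
        ext j
        simp only [Finset.mem_range, Finset.mem_insert, Finset.mem_Ico]
        omega
      set f : ℕ → ℝ := fun j =>
        (∫ ω, Z ω ^ j ∂P) * (∫ ω, T ω ^ (m - j) ∂P) * (m.choose j : ℝ) with hf_def
      have h0mem : (0:ℕ) ∉ insert 1 (Finset.Ico 2 (m+1)) := by simp
      have h1mem : (1:ℕ) ∉ Finset.Ico 2 (m+1) := by simp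
      have hsum : ∑ j ∈ range (m + 1), f j = f 0 + (f 1 + ∑ j ∈ Finset.Ico 2 (m+1), f j) := by
        rw [hsplit, Finset.sum_insert h0mem, Finset.sum_insert h1mem]
      have hf0 : f 0 = ∫ ω, T ω ^ m ∂P := by
        simp [hf_def]
      have hf1 : f 1 = 0 := by
        have hz0 : ∫ ω, Z ω ∂P = 0 := hmean i
        simp [hf_def, pow_one, hz0]
      have hfj : ∀ j ∈ Finset.Ico 2 (m+1), f j ≤ (1 + B * c ^ k) * (m.choose j : ℝ) := by
        intro j hj
        simp only [Finset.mem_Ico] at hj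
        have hmj : m - j ≤ 2 * k := by omega
        have hb1 : |∫ ω, Z ω ^ j ∂P| ≤ 1 := hZ_le j
        have hb2 : |∫ ω, T ω ^ (m - j) ∂P| ≤ 1 + B * c ^ k := hT_le _ hmj
        have hnn : (0:ℝ) ≤ (m.choose j : ℝ) := Nat.cast_nonneg _
        have hnn2 : (0:ℝ) ≤ 1 + B * c ^ k := by
          have : (0:ℝ) ≤ B * c ^ k := mul_nonneg (by linarith) (pow_nonneg hc0 k)
          linarith
        calc f j ≤ |f j| := le_abs_self _
          _ = |∫ ω, Z ω ^ j ∂P| * |∫ ω, T ω ^ (m - j) ∂P| * (m.choose j : ℝ) := by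
              rw [hf_def]; rw [abs_mul, abs_mul, abs_of_nonneg hnn]
          _ ≤ 1 * (1 + B * c ^ k) * (m.choose j : ℝ) := by
              apply mul_le_mul_of_nonneg_right _ hnn
              exact mul_le_mul hb1 hb2 (abs_nonneg _) zero_le_one
          _ = (1 + B * c ^ k) * (m.choose j : ℝ) := by ring
      have hchoose : ∑ j ∈ Finset.Ico 2 (m+1), (m.choose j : ℝ) ≤ 2 ^ m := by
        have h1 : ∑ j ∈ Finset.Ico 2 (m+1), m.choose j ≤ ∑ j ∈ range (m+1), m.choose j := by
          apply Finset.sum_le_sum_of_subset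
          intro j hj
          simp only [Finset.mem_Ico] at hj
          simp only [Finset.mem_range]
          omega
        rw [Nat.sum_range_choose] at h1
        calc ∑ j ∈ Finset.Ico 2 (m+1), (m.choose j : ℝ)
            = ((∑ j ∈ Finset.Ico 2 (m+1), m.choose j : ℕ) : ℝ) := by push_cast; ring
          _ ≤ ((2 ^ m : ℕ) : ℝ) := by exact_mod_cast h1
          _ = 2 ^ m := by push_cast; ring
      have hnn2 : (0:ℝ) ≤ 1 + B * c ^ k := by
        have : (0:ℝ) ≤ B * c ^ k := mul_nonneg (by linarith) (pow_nonneg hc0 k)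
        linarith
      have hIco : ∑ j ∈ Finset.Ico 2 (m+1), f j ≤ (1 + B * c ^ k) * 2 ^ m := by
        calc ∑ j ∈ Finset.Ico 2 (m+1), f j
            ≤ ∑ j ∈ Finset.Ico 2 (m+1), (1 + B * c ^ k) * (m.choose j : ℝ) :=
              Finset.sum_le_sum hfj
          _ = (1 + B * c ^ k) * ∑ j ∈ Finset.Ico 2 (m+1), (m.choose j : ℝ) := by
              rw [Finset.mul_sum]
          _ ≤ (1 + B * c ^ k) * 2 ^ m := by
              exact mul_le_mul_of_nonneg_left hchoose hnn2
      have hTm : ∫ ω, T ω ^ m ∂P ≤ 2 ^ m * (1 + B) * c ^ (k+1) := by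
        have := IHs
        simpa [hT_def, hc_def, hm_def] using IHs
      -- final arithmetic
      have hcard : ((insert i s).card : ℝ) = c + 1 := by
        rw [Finset.card_insert_of_notMem hi]; push_cast [hc_def]; ring
      rw [key, hcard]
      calc ∑ j ∈ range (m + 1), f j
          = f 0 + (f 1 + ∑ j ∈ Finset.Ico 2 (m+1), f j) := hsum
        _ ≤ 2 ^ m * (1 + B) * c ^ (k+1) + (1 + B * c ^ k) * 2 ^ m := by
            rw [hf0, hf1]
            have := hTm
            linarith [hIco]
        _ ≤ 2 ^ m * (1 + B) * (c + 1) ^ (k + 1) := by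
            have h2m : (0:ℝ) < 2 ^ m := pow_pos (by norm_num) m
            rcases Nat.eq_zero_or_pos s.card with hc | hc
            · have hc' : c = 0 := by simp [hc_def, hc]
              rw [hc']
              rcases Nat.eq_zero_or_pos k with hk | hk
              · rw [hk]; norm_num; nlinarith
              · have hz1 : (0:ℝ) ^ k = 0 := zero_pow (by omega)
                have hz2 : (0:ℝ) ^ (k+1) = 0 := zero_pow (by omega)
                rw [hz1, hz2]
                norm_num
                nlinarith
            · have hc1 : (1:ℝ) ≤ c := by
                simp only [hc_def]; exact_mod_cast hc
              have hck : (1:ℝ) ≤ c ^ k := one_le_pow₀ hc1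
              have h1 : 1 + B * c ^ k ≤ (1 + B) * c ^ k := by nlinarith
              have h2 : c ^ (k+1) + c ^ k ≤ (c + 1) ^ (k+1) := by
                have h3 : c ^ k ≤ (c + 1) ^ k := pow_le_pow_left₀ hc0 (by linarith) k
                calc c ^ (k+1) + c ^ k = (c + 1) * c ^ k := by rw [pow_succ]; ring
                  _ ≤ (c + 1) * (c + 1) ^ k :=
                    mul_le_mul_of_nonneg_left h3 (by linarith)
                  _ = (c + 1) ^ (k+1) := by rw [pow_succ]; ring
              calc 2 ^ m * (1 + B) * c ^ (k+1) + (1 + B * c ^ k) * 2 ^ m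
                  ≤ 2 ^ m * (1 + B) * c ^ (k+1) + ((1 + B) * c ^ k) * 2 ^ m :=
                    by nlinarith
                _ = 2 ^ m * (1 + B) * (c ^ (k+1) + c ^ k) := by ring
                _ ≤ 2 ^ m * (1 + B) * (c + 1) ^ (k+1) := by
                    apply mul_le_mul_of_nonneg_left h2
                    nlinarith

end Helpers

/-- pointwise interpolation inequality -/
private lemma rpow_split {t r : ℝ} (ht : 0 ≤ t) (hr : 0 < r) {p : ℝ} (hp : 0 < p) (k : ℕ)
    (h1 : 2 * (k:ℝ) ≤ p) (h2 : p ≤ 2 * (k:ℝ) + 2) :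
    t ^ p ≤ r ^ (p - 2 * (k:ℝ)) * t ^ (2 * k) + r ^ (p - (2 * (k:ℝ) + 2)) * t ^ (2 * k + 2) := by
  have hrp1 : (0:ℝ) ≤ r ^ (p - 2 * (k:ℝ)) := (Real.rpow_pos_of_pos hr _).le
  have hrp2 : (0:ℝ) ≤ r ^ (p - (2 * (k:ℝ) + 2)) := (Real.rpow_pos_of_pos hr _).le
  rcases eq_or_lt_of_le ht with ht0 | ht0
  · rw [← ht0, Real.zero_rpow hp.ne']
    positivity
  rcases le_total t r with htr | htr
  · have key : t ^ p ≤ r ^ (p - 2 * (k:ℝ)) * t ^ (2 * k) := by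
      have hsplit : t ^ p = t ^ (2 * (k:ℝ)) * t ^ (p - 2 * (k:ℝ)) := by
        rw [← Real.rpow_add ht0]; ring_nf
      rw [hsplit]
      have hmono : t ^ (p - 2 * (k:ℝ)) ≤ r ^ (p - 2 * (k:ℝ)) :=
        Real.rpow_le_rpow ht htr (by linarith)
      have hnat : t ^ (2 * (k:ℝ)) = t ^ (2 * k) := by
        rw [show (2 * (k:ℝ)) = ((2 * k : ℕ) : ℝ) by push_cast; ring, Real.rpow_natCast]
      rw [hnat]
      calc t ^ (2 * k) * t ^ (p - 2 * (k:ℝ)) ≤ t ^ (2 * k) * r ^ (p - 2 * (k:ℝ)) := by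
            exact mul_le_mul_of_nonneg_left hmono (pow_nonneg ht _)
        _ = r ^ (p - 2 * (k:ℝ)) * t ^ (2 * k) := by ring
    have : (0:ℝ) ≤ r ^ (p - (2 * (k:ℝ) + 2)) * t ^ (2 * k + 2) := by positivity
    linarith
  · have key : t ^ p ≤ r ^ (p - (2 * (k:ℝ) + 2)) * t ^ (2 * k + 2) := by
      have hsplit : t ^ p = t ^ (2 * (k:ℝ) + 2) * t ^ (p - (2 * (k:ℝ) + 2)) := by
        rw [← Real.rpow_add ht0]; ring_nf
      rw [hsplit]
      have hmono : t ^ (p - (2 * (k:ℝ) + 2)) ≤ r ^ (p - (2 * (k:ℝ) + 2)) :=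
        Real.rpow_le_rpow_of_nonpos hr htr (by linarith)
      have hnat : t ^ (2 * (k:ℝ) + 2) = t ^ (2 * k + 2) := by
        rw [show (2 * (k:ℝ) + 2) = ((2 * k + 2 : ℕ) : ℝ) by push_cast; ring, Real.rpow_natCast]
      rw [hnat]
      calc t ^ (2 * k + 2) * t ^ (p - (2 * (k:ℝ) + 2))
          ≤ t ^ (2 * k + 2) * r ^ (p - (2 * (k:ℝ) + 2)) :=
            mul_le_mul_of_nonneg_left hmono (pow_nonneg ht _)
        _ = r ^ (p - (2 * (k:ℝ) + 2)) * t ^ (2 * k + 2) := by ring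
    have : (0:ℝ) ≤ r ^ (p - 2 * (k:ℝ)) * t ^ (2 * k) := by positivity
    linarith

/-- For every `p ≥ 1` and `b > 0` there is a constant `C > 0` depending only on `p` and
`b` such that for every `n ≥ 1` and every i.i.d. sample `X₁, …, X_n`,
`E(∫_{−b}^{b} |F̂(x) − F(x)|^p dx) ≤ C n^{−p/2}`, where `F̂` is the empirical
distribution function and `F` the common CDF. -/
theorem stmt4 (p : ℝ) (hp : 1 ≤ p) (b : ℝ) (hb : 0 < b) :
    ∃ C > (0 : ℝ),
      ∀ (Ω : Type) (_mΩ : MeasurableSpace Ω) (P : Measure Ω)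
        (_hP : IsProbabilityMeasure P)
        (n : ℕ) (hn : 1 ≤ n)
        (X : Fin n → Ω → ℝ)
        (_hmeas : ∀ i, Measurable (X i))
        (_hindep : iIndepFun X P)
        (_hident : ∀ i, Measure.map (X i) P = Measure.map (X ⟨0, hn⟩) P),
          (∫ ω, (∫ x in Set.Icc (-b) b,
              |(1 / (n : ℝ)) * ∑ i, (if X i ω ≤ x then (1 : ℝ) else 0) -
                (P {ω' | X ⟨0, hn⟩ ω' ≤ x}).toReal| ^ p) ∂P) ≤
            C * (n : ℝ) ^ (-(p / 2)) := by
  classical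
  set k : ℕ := ⌊p / 2⌋₊ with hk_def
  have hp0 : (0:ℝ) < p := by linarith
  have hk1 : 2 * (k:ℝ) ≤ p := by
    have := Nat.floor_le (show (0:ℝ) ≤ p / 2 by linarith)
    linarith
  have hk2 : p ≤ 2 * (k:ℝ) + 2 := by
    have := Nat.lt_floor_add_one (p / 2)
    linarith
  obtain ⟨B1, hB11, hB1⟩ := moment_bound k
  obtain ⟨B2, hB21, hB2⟩ := moment_bound (k + 1)
  refine ⟨2 * b * (B1 + B2), by nlinarith, ?_⟩
  intro Ω mΩ P hP n hn X hXmeas hXindep hXident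
  have hn0 : (0:ℝ) < n := by exact_mod_cast hn
  -- key pointwise-in-x bound on the ω-integral
  have hxbound : ∀ x : ℝ,
      ∫ ω, |(1 / (n : ℝ)) * ∑ i, (if X i ω ≤ x then (1 : ℝ) else 0) -
          (P {ω' | X ⟨0, hn⟩ ω' ≤ x}).toReal| ^ p ∂P ≤ (B1 + B2) * (n : ℝ) ^ (-(p / 2)) := by
    intro x
    set F : ℝ := (P {ω' | X ⟨0, hn⟩ ω' ≤ x}).toReal with hF_def
    have hF0 : 0 ≤ F := ENNReal.toReal_nonneg
    have hF1 : F ≤ 1 := by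
      rw [hF_def]
      exact ENNReal.toReal_le_of_le_ofReal zero_le_one (by simpa using prob_le_one)
    set Y : Fin n → Ω → ℝ := fun i ω => (if X i ω ≤ x then (1 : ℝ) else 0) - F with hY_def
    have hYmeas : ∀ i, Measurable (Y i) := by
      intro i
      apply Measurable.sub _ measurable_const
      have hset : MeasurableSet {ω | X i ω ≤ x} := measurableSet_le (hXmeas i) measurable_const
      exact Measurable.ite hset measurable_const measurable_const
    have hYindep : iIndepFun Y P := by
      have hg : ∀ i : Fin n, Measurable (fun t : ℝ => (if t ≤ x then (1:ℝ) else 0) - F) := by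
        intro i
        apply Measurable.sub _ measurable_const
        exact Measurable.ite (measurableSet_Iic) measurable_const measurable_const
      have := hXindep.comp (fun _ => fun t : ℝ => (if t ≤ x then (1:ℝ) else 0) - F) hg
      exact this
    have hYbd : ∀ i ω, |Y i ω| ≤ 1 := by
      intro i ω
      rw [hY_def]
      simp only
      rcases le_or_gt (X i ω) x with h | h
      · rw [if_pos h]; rw [abs_le]; constructor <;> linarith
      · rw [if_neg (not_le.mpr h)]; rw [abs_le]; constructor <;> linarith
    have hYmean : ∀ i, ∫ ω, Y i ω ∂P = 0 := by
      intro i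
      have hset : MeasurableSet (X i ⁻¹' Set.Iic x) := (hXmeas i) measurableSet_Iic
      have hind : (fun ω => (if X i ω ≤ x then (1:ℝ) else 0))
          = (X i ⁻¹' Set.Iic x).indicator (fun _ => (1:ℝ)) := by
        funext ω
        by_cases h : X i ω ≤ x
        · rw [if_pos h, Set.indicator_of_mem (by simpa using h)]
        · rw [if_neg h, Set.indicator_of_notMem (by simpa using h)]
      have hint1 : ∫ ω, (if X i ω ≤ x then (1:ℝ) else 0) ∂P = (P (X i ⁻¹' Set.Iic x)).toReal := by
        rw [hind, integral_indicator_const (1:ℝ) hset]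
        simp
        rfl
      have hmap : P (X i ⁻¹' Set.Iic x) = P {ω' | X ⟨0, hn⟩ ω' ≤ x} := by
        have h1 : P (X i ⁻¹' Set.Iic x) = Measure.map (X i) P (Set.Iic x) := by
          rw [Measure.map_apply (hXmeas i) measurableSet_Iic]
        have h2 : P (X ⟨0, hn⟩ ⁻¹' Set.Iic x) = Measure.map (X ⟨0, hn⟩) P (Set.Iic x) := by
          rw [Measure.map_apply (hXmeas _) measurableSet_Iic]
        have h3 : {ω' | X ⟨0, hn⟩ ω' ≤ x} = X ⟨0, hn⟩ ⁻¹' Set.Iic x := rfl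
        rw [h3, h2, ← hXident i, ← h1]
      have hInt : Integrable (fun ω => (if X i ω ≤ x then (1:ℝ) else 0)) P := by
        refine my_integrable (M := 1)
          (Measurable.ite (measurableSet_le (hXmeas i) measurable_const)
            measurable_const measurable_const) fun ω => ?_
        split <;> simp
      rw [hY_def]
      simp only
      rw [integral_sub hInt (integrable_const F), hint1, hmap, integral_const]
      simp [hF_def]
    -- sums
    set S : Ω → ℝ := fun ω => ∑ i, Y i ω with hS_def
    have hSmeas : Measurable S := Finset.measurable_sum _ fun j _ => hYmeas j
    have hSbd : ∀ ω, |S ω| ≤ n := by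
      intro ω
      calc |S ω| ≤ ∑ i, |Y i ω| := Finset.abs_sum_le_sum_abs _ _
        _ ≤ ∑ _i : Fin n, (1:ℝ) := Finset.sum_le_sum fun j _ => hYbd j ω
        _ = n := by simp
    have hDelta : ∀ ω, (1 / (n : ℝ)) * ∑ i, (if X i ω ≤ x then (1 : ℝ) else 0) - F
        = (1 / (n : ℝ)) * S ω := by
      intro ω
      rw [hS_def]
      simp only [hY_def]
      rw [Finset.sum_sub_distrib]
      simp only [Finset.sum_const, Finset.card_univ, Fintype.card_fin, nsmul_eq_mul]
      field_simp
    -- moment bounds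
    have hMom1 : ∫ ω, S ω ^ (2 * k) ∂P ≤ B1 * (n:ℝ) ^ k := by
      have := hB1 Ω mΩ P hP n Y hYmeas hYindep hYbd hYmean Finset.univ
      simpa [hS_def] using this
    have hMom2 : ∫ ω, S ω ^ (2 * (k+1)) ∂P ≤ B2 * (n:ℝ) ^ (k+1) := by
      have := hB2 Ω mΩ P hP n Y hYmeas hYindep hYbd hYmean Finset.univ
      simpa [hS_def] using this
    -- pointwise bound
    set r : ℝ := (n:ℝ) ^ (-(1/2) : ℝ) with hr_def
    have hr0 : 0 < r := Real.rpow_pos_of_pos hn0 _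
    have hptw : ∀ ω, |(1 / (n : ℝ)) * ∑ i, (if X i ω ≤ x then (1 : ℝ) else 0) - F| ^ p
        ≤ r ^ (p - 2 * (k:ℝ)) * ((1/(n:ℝ)) * S ω) ^ (2 * k)
          + r ^ (p - (2 * (k:ℝ) + 2)) * ((1/(n:ℝ)) * S ω) ^ (2 * k + 2) := by
      intro ω
      rw [hDelta ω]
      have h1 := rpow_split (t := |(1/(n:ℝ)) * S ω|) (abs_nonneg _) hr0 hp0 k hk1 hk2
      have h2 : ∀ a : ℕ, Even a → |(1/(n:ℝ)) * S ω| ^ a = ((1/(n:ℝ)) * S ω) ^ a := by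
        intro a ha
        rw [pow_abs, abs_of_nonneg (ha.pow_nonneg _)]
      rw [h2 _ (even_two_mul k), h2 _ ⟨k + 1, by ring⟩] at h1
      exact h1
    -- integrate the pointwise bound
    set D : Ω → ℝ := fun ω => (1/(n:ℝ)) * S ω with hD_def
    have hDmeas : Measurable D := measurable_const.mul hSmeas
    have hDbd : ∀ ω, |D ω| ≤ 1 := by
      intro ω
      rw [hD_def]
      simp only
      rw [abs_mul, abs_of_nonneg (by positivity : (0:ℝ) ≤ 1/(n:ℝ))]
      rw [div_mul_eq_mul_div, one_mul, div_le_one hn0]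
      exact hSbd ω
    have hDpow_bd : ∀ a : ℕ, ∀ ω, |D ω ^ a| ≤ 1 := fun a ω => by
      rw [abs_pow]; exact pow_le_one₀ (abs_nonneg _) (hDbd ω)
    have hDint : ∀ a : ℕ, Integrable (fun ω => D ω ^ a) P :=
      fun a => my_integrable (hDmeas.pow_const a) (hDpow_bd a)
    set r1 : ℝ := r ^ (p - 2 * (k:ℝ)) with hr1_def
    set r2 : ℝ := r ^ (p - (2 * (k:ℝ) + 2)) with hr2_def
    have hr1 : 0 < r1 := Real.rpow_pos_of_pos hr0 _
    have hr2 : 0 < r2 := Real.rpow_pos_of_pos hr0 _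
    have hIle : ∫ ω, |(1 / (n : ℝ)) * ∑ i, (if X i ω ≤ x then (1 : ℝ) else 0) - F| ^ p ∂P
        ≤ r1 * ∫ ω, D ω ^ (2*k) ∂P + r2 * ∫ ω, D ω ^ (2*k+2) ∂P := by
      have hInt2 : Integrable (fun ω => r1 * D ω ^ (2*k) + r2 * D ω ^ (2*k+2)) P :=
        ((hDint (2*k)).const_mul r1).add ((hDint (2*k+2)).const_mul r2)
      calc ∫ ω, |(1 / (n : ℝ)) * ∑ i, (if X i ω ≤ x then (1 : ℝ) else 0) - F| ^ p ∂P
          ≤ ∫ ω, (r1 * D ω ^ (2*k) + r2 * D ω ^ (2*k+2)) ∂P := by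
            refine integral_mono_of_nonneg ?_ hInt2 ?_
            · exact Filter.Eventually.of_forall fun ω =>
                Real.rpow_nonneg (abs_nonneg _) p
            · exact Filter.Eventually.of_forall fun ω => hptw ω
        _ = r1 * ∫ ω, D ω ^ (2*k) ∂P + r2 * ∫ ω, D ω ^ (2*k+2) ∂P := by
            rw [integral_add ((hDint (2*k)).const_mul r1) ((hDint (2*k+2)).const_mul r2),
              integral_const_mul, integral_const_mul]
    have hDS1 : ∫ ω, D ω ^ (2*k) ∂P = (1/(n:ℝ))^(2*k) * ∫ ω, S ω ^ (2*k) ∂P := by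
      simp_rw [hD_def, mul_pow]
      rw [integral_const_mul]
    have hDS2 : ∫ ω, D ω ^ (2*k+2) ∂P = (1/(n:ℝ))^(2*k+2) * ∫ ω, S ω ^ (2*k+2) ∂P := by
      simp_rw [hD_def, mul_pow]
      rw [integral_const_mul]
    -- exponent arithmetic
    have hone : ∀ a : ℕ, (1/(n:ℝ))^a = (n:ℝ) ^ (-(a:ℝ)) := by
      intro a
      rw [Real.rpow_neg hn0.le, Real.rpow_natCast, one_div, inv_pow]
    have hnat : ∀ a : ℕ, (n:ℝ)^a = (n:ℝ) ^ ((a:ℝ)) := fun a => (Real.rpow_natCast _ a).symm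
    have e1 : r1 * ((1/(n:ℝ))^(2*k) * (n:ℝ)^k) = (n:ℝ) ^ (-(p/2)) := by
      rw [hr1_def, hr_def, ← Real.rpow_mul hn0.le, hone (2*k), hnat k,
        ← Real.rpow_add hn0, ← Real.rpow_add hn0]
      congr 1
      push_cast
      ring
    have e2 : r2 * ((1/(n:ℝ))^(2*k+2) * (n:ℝ)^(k+1)) = (n:ℝ) ^ (-(p/2)) := by
      rw [hr2_def, hr_def, ← Real.rpow_mul hn0.le, hone (2*k+2), hnat (k+1),
        ← Real.rpow_add hn0, ← Real.rpow_add hn0]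
      congr 1
      push_cast
      ring
    have hpos1 : (0:ℝ) ≤ (1/(n:ℝ))^(2*k) := by positivity
    have hpos2 : (0:ℝ) ≤ (1/(n:ℝ))^(2*k+2) := by positivity
    calc ∫ ω, |(1 / (n : ℝ)) * ∑ i, (if X i ω ≤ x then (1 : ℝ) else 0) - F| ^ p ∂P
        ≤ r1 * ∫ ω, D ω ^ (2*k) ∂P + r2 * ∫ ω, D ω ^ (2*k+2) ∂P := hIle
      _ ≤ r1 * ((1/(n:ℝ))^(2*k) * (B1 * (n:ℝ)^k))
          + r2 * ((1/(n:ℝ))^(2*k+2) * (B2 * (n:ℝ)^(k+1))) := by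
          rw [hDS1, hDS2]
          have t1 : (1/(n:ℝ))^(2*k) * ∫ ω, S ω ^ (2*k) ∂P
              ≤ (1/(n:ℝ))^(2*k) * (B1 * (n:ℝ)^k) := mul_le_mul_of_nonneg_left hMom1 hpos1
          have t2 : (1/(n:ℝ))^(2*k+2) * ∫ ω, S ω ^ (2*(k+1)) ∂P
              ≤ (1/(n:ℝ))^(2*k+2) * (B2 * (n:ℝ)^(k+1)) := mul_le_mul_of_nonneg_left hMom2 hpos2
          have h2k2 : 2*(k+1) = 2*k+2 := by ring
          rw [h2k2] at t2
          have := mul_le_mul_of_nonneg_left t1 hr1.le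
          have := mul_le_mul_of_nonneg_left t2 hr2.le
          linarith
      _ = B1 * (r1 * ((1/(n:ℝ))^(2*k) * (n:ℝ)^k))
          + B2 * (r2 * ((1/(n:ℝ))^(2*k+2) * (n:ℝ)^(k+1))) := by ring
      _ = (B1 + B2) * (n : ℝ) ^ (-(p / 2)) := by rw [e1, e2]; ring
  -- Fubini and integration in x
  set f : Ω → ℝ → ℝ := fun ω x =>
    |(1 / (n : ℝ)) * ∑ i, (if X i ω ≤ x then (1 : ℝ) else 0) -
      (P {ω' | X ⟨0, hn⟩ ω' ≤ x}).toReal| ^ p with hf_def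
  set ν : Measure ℝ := volume.restrict (Set.Icc (-b) b) with hν_def
  haveI hνfin : IsFiniteMeasure ν := by
    constructor
    rw [hν_def, Measure.restrict_apply_univ, Real.volume_Icc]
    exact ENNReal.ofReal_lt_top
  have hGmono : Monotone (fun x : ℝ => (P {ω' | X ⟨0, hn⟩ ω' ≤ x}).toReal) := by
    intro x y hxy
    apply ENNReal.toReal_mono (measure_ne_top P _)
    exact measure_mono fun ω' hω' => le_trans hω' hxy
  have habs_meas : Measurable (fun q : Ω × ℝ =>
      |(1 / (n : ℝ)) * ∑ i, (if X i q.1 ≤ q.2 then (1 : ℝ) else 0) -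
        (P {ω' | X ⟨0, hn⟩ ω' ≤ q.2}).toReal|) := by
    apply Measurable.abs
    apply Measurable.sub
    · apply Measurable.const_mul
      apply Finset.measurable_sum
      intro i _
      have hset : MeasurableSet {q : Ω × ℝ | X i q.1 ≤ q.2} :=
        measurableSet_le ((hXmeas i).comp measurable_fst) measurable_snd
      exact Measurable.ite hset measurable_const measurable_const
    · exact (hGmono.measurable).comp measurable_snd
  have hfmeas : Measurable (Function.uncurry f) := by
    have : Function.uncurry f = (fun t : ℝ => t ^ p) ∘ (fun q : Ω × ℝ =>
        |(1 / (n : ℝ)) * ∑ i, (if X i q.1 ≤ q.2 then (1 : ℝ) else 0) -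
          (P {ω' | X ⟨0, hn⟩ ω' ≤ q.2}).toReal|) := rfl
    rw [this]
    exact (Real.continuous_rpow_const hp0.le).measurable.comp habs_meas
  have hfbd : ∀ ω x, |f ω x| ≤ 1 := by
    intro ω x
    have h1 : (0:ℝ) ≤ (1 / (n : ℝ)) * ∑ i, (if X i ω ≤ x then (1 : ℝ) else 0) := by
      apply mul_nonneg (by positivity)
      apply Finset.sum_nonneg
      intro i _
      split <;> norm_num
    have h2 : (1 / (n : ℝ)) * ∑ i, (if X i ω ≤ x then (1 : ℝ) else 0) ≤ 1 := by
      rw [div_mul_eq_mul_div, one_mul, div_le_one hn0]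
      calc ∑ i, (if X i ω ≤ x then (1 : ℝ) else 0) ≤ ∑ _i : Fin n, (1:ℝ) := by
            apply Finset.sum_le_sum
            intro i _
            split <;> norm_num
        _ = n := by simp
    have h3 : (0:ℝ) ≤ (P {ω' | X ⟨0, hn⟩ ω' ≤ x}).toReal := ENNReal.toReal_nonneg
    have h4 : (P {ω' | X ⟨0, hn⟩ ω' ≤ x}).toReal ≤ 1 :=
      ENNReal.toReal_le_of_le_ofReal zero_le_one (by simpa using prob_le_one)
    have habs : |(1 / (n : ℝ)) * ∑ i, (if X i ω ≤ x then (1 : ℝ) else 0) -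
        (P {ω' | X ⟨0, hn⟩ ω' ≤ x}).toReal| ≤ 1 := by
      rw [abs_le]; constructor <;> linarith
    have h5 : f ω x = |(1 / (n : ℝ)) * ∑ i, (if X i ω ≤ x then (1 : ℝ) else 0) -
        (P {ω' | X ⟨0, hn⟩ ω' ≤ x}).toReal| ^ p := rfl
    rw [h5, abs_of_nonneg (Real.rpow_nonneg (abs_nonneg _) p)]
    exact Real.rpow_le_one (abs_nonneg _) habs hp0.le
  haveI : IsFiniteMeasure (P.prod ν) := by infer_instance
  have hfint : Integrable (Function.uncurry f) (P.prod ν) := by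
    apply my_integrable hfmeas (M := 1)
    intro q
    exact hfbd q.1 q.2
  have hswap : ∫ ω, ∫ x, f ω x ∂ν ∂P = ∫ x, ∫ ω, f ω x ∂P ∂ν :=
    integral_integral_swap hfint
  have hfnonneg : ∀ ω x, 0 ≤ f ω x := fun ω x => Real.rpow_nonneg (abs_nonneg _) p
  have hfinal : ∫ x, ∫ ω, f ω x ∂P ∂ν ≤ (2 * b) * ((B1 + B2) * (n : ℝ) ^ (-(p / 2))) := by
    have hub : ∀ x, ∫ ω, f ω x ∂P ≤ (B1 + B2) * (n : ℝ) ^ (-(p / 2)) := fun x => hxbound x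
    calc ∫ x, ∫ ω, f ω x ∂P ∂ν ≤ ∫ _x, (B1 + B2) * (n : ℝ) ^ (-(p / 2)) ∂ν := by
          refine integral_mono_of_nonneg ?_ (integrable_const _) ?_
          · exact Filter.Eventually.of_forall fun x => integral_nonneg fun ω => hfnonneg ω x
          · exact Filter.Eventually.of_forall hub
      _ = (ν Set.univ).toReal * ((B1 + B2) * (n : ℝ) ^ (-(p / 2))) := by
          rw [integral_const, smul_eq_mul]
          rfl
      _ = (2 * b) * ((B1 + B2) * (n : ℝ) ^ (-(p / 2))) := by
          congr 1
          rw [hν_def, Measure.restrict_apply_univ, Real.volume_Icc]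
          rw [ENNReal.toReal_ofReal (by linarith)]
          ring
  calc ∫ ω, (∫ x in Set.Icc (-b) b,
        |(1 / (n : ℝ)) * ∑ i, (if X i ω ≤ x then (1 : ℝ) else 0) -
          (P {ω' | X ⟨0, hn⟩ ω' ≤ x}).toReal| ^ p) ∂P
      = ∫ ω, ∫ x, f ω x ∂ν ∂P := rfl
    _ = ∫ x, ∫ ω, f ω x ∂P ∂ν := hswap
    _ ≤ (2 * b) * ((B1 + B2) * (n : ℝ) ^ (-(p / 2))) := hfinal
    _ = 2 * b * (B1 + B2) * (n : ℝ) ^ (-(p / 2)) := by ring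
end

section
/- Suppose the common density f of the X_i satisfies 0 ≤ f(x) ≤ C₁ for all x ∈ [−b,b], and w : [0,1] → ℝ satisfies |w(u) − w(v)| ≤ C₂|u − v| for all u, v ∈ [0,1]. Let g(x) = w(F(x))f(x), let F̂ be the empirical distribution function, let f̂ be any (random) measurable estimator of f, and set ĝ(x) = w(F̂(x))f̂(x). Then for every p ≥ 1 there exists a constant C > 0 depending only on p, b, C₁, C₂ and |w(0)| such that E(∫_{−b}^{b} |ĝ(x) − g(x)|^p dx) ≤ C ( E(∫_{−b}^{b} |f̂(x) − f(x)|^p dx) + n^{−p/2} ). -/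
open MeasureTheory ProbabilityTheory

namespace Stmt5Aux

variable {Ω : Type} [MeasurableSpace Ω] {P : Measure Ω} [IsProbabilityMeasure P]

lemma integrable_of_abs_le {g : Ω → ℝ} (hg : Measurable g) {c : ℝ} (hb : ∀ ω, |g ω| ≤ c) :
    Integrable g P :=
  (integrable_const c).mono' hg.aestronglyMeasurable
    (Filter.Eventually.of_forall fun ω => by simpa [Real.norm_eq_abs] using hb ω)

lemma integral_prod_indep {n : ℕ} (Y : Fin n → Ω → ℝ)
    (hmeas : ∀ i, Measurable (Y i)) (hbd : ∀ i ω, |Y i ω| ≤ 1)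
    (hindep : iIndepFun Y P) (s : Finset (Fin n)) :
    ∫ ω, ∏ i ∈ s, Y i ω ∂P = ∏ i ∈ s, ∫ ω, Y i ω ∂P := by
  classical
  refine Finset.induction_on s (by simp) ?_
  intro i t hi ih
  have hpm : Measurable (fun ω => ∏ j ∈ t, Y j ω) :=
    Finset.measurable_prod _ fun j _ => hmeas j
  have hpb : ∀ ω, |∏ j ∈ t, Y j ω| ≤ 1 := fun ω => by
    rw [Finset.abs_prod]
    exact Finset.prod_le_one (fun j _ => abs_nonneg _) fun j _ => hbd j ω
  have hind : IndepFun (Y i) (fun ω => ∏ j ∈ t, Y j ω) P := by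
    have h := (hindep.indepFun_finsetProd_of_notMem hmeas hi).symm
    have he : (∏ j ∈ t, Y j) = fun ω => ∏ j ∈ t, Y j ω := by
      funext ω; simp
    rwa [he] at h
  simp only [Finset.prod_insert hi]
  rw [← ih]
  exact hind.integral_mul_eq_mul_integral (hmeas i).aestronglyMeasurable
    hpm.aestronglyMeasurable

def fibcard {m n : ℕ} (g : Fin m → Fin n) (i : Fin n) : ℕ :=
  (Finset.univ.filter (fun j => g j = i)).card

lemma prod_comp_univ {m n : ℕ} (Z : Fin n → ℝ) (g : Fin m → Fin n) :
    ∏ j, Z (g j) = ∏ i, Z i ^ fibcard g i := by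
  classical
  rw [Finset.prod_comp Z g]
  unfold fibcard
  refine Finset.prod_subset (Finset.subset_univ _) ?_
  intro i _ hi
  have hzero : (Finset.univ.filter (fun j => g j = i)).card = 0 := by
    simp only [Finset.card_eq_zero, Finset.filter_eq_empty_iff]
    intro j _
    exact fun hj => hi (hj ▸ Finset.mem_image_of_mem g (Finset.mem_univ j))
  simp [hzero]

lemma count_bound (n k : ℕ) (hk : 1 ≤ k) :
    ((Finset.univ : Finset (Fin (2*k) → Fin n)).filter
      (fun g => ∀ i, fibcard g i ≠ 1)).card
      ≤ k ^ (2*k) * n ^ k := by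
  classical
  unfold fibcard
  have hcard : ∀ g ∈ (Finset.univ : Finset (Fin (2*k) → Fin n)).filter
      (fun g => ∀ i, (Finset.univ.filter (fun j => g j = i)).card ≠ 1),
      (Finset.univ.image g).card ≤ k := by
    intro g hg
    rw [Finset.mem_filter] at hg
    have hsum : (Finset.univ : Finset (Fin (2*k))).card
        = ∑ b ∈ Finset.univ.image g, (Finset.univ.filter (fun j => g j = b)).card :=
      Finset.card_eq_sum_card_fiberwise (fun x _ => Finset.mem_image_of_mem g (Finset.mem_univ x))
    have h2 : ∀ b ∈ Finset.univ.image g, 2 ≤ (Finset.univ.filter (fun j => g j = b)).card := by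
      intro b hb
      obtain ⟨j, _, hj⟩ := Finset.mem_image.mp hb
      have h1 : 0 < (Finset.univ.filter (fun j' => g j' = b)).card :=
        Finset.card_pos.mpr ⟨j, Finset.mem_filter.mpr ⟨Finset.mem_univ j, hj⟩⟩
      have := hg.2 b
      omega
    have : 2 * (Finset.univ.image g).card ≤ 2 * k := by
      calc 2 * (Finset.univ.image g).card = ∑ _b ∈ Finset.univ.image g, 2 := by
            simp [mul_comm]
        _ ≤ ∑ b ∈ Finset.univ.image g, (Finset.univ.filter (fun j => g j = b)).card :=
            Finset.sum_le_sum h2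
        _ = (Finset.univ : Finset (Fin (2*k))).card := hsum.symm
        _ = 2 * k := by simp
    omega
  have hsurj : Set.SurjOn (fun p : (Fin (2*k) → Fin k) × (Fin k → Fin n) => p.2 ∘ p.1)
      (Finset.univ : Finset ((Fin (2*k) → Fin k) × (Fin k → Fin n)))
      (((Finset.univ : Finset (Fin (2*k) → Fin n)).filter
        (fun g => ∀ i, (Finset.univ.filter (fun j => g j = i)).card ≠ 1)) : Set _) := by
    intro g hg
    have hg' : g ∈ _ := hg
    have hc := hcard g hg'
    set s := Finset.univ.image g with hs
    let e := s.orderIsoOfFin rfl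
    have hmem : ∀ j, g j ∈ s := fun j => Finset.mem_image_of_mem g (Finset.mem_univ j)
    refine ⟨⟨fun j => Fin.castLE hc (e.symm ⟨g j, hmem j⟩),
      fun i => if h : (i : ℕ) < s.card then (e ⟨i, h⟩ : Fin n) else g ⟨0, by omega⟩⟩,
      by simp, ?_⟩
    funext j
    simp only [Function.comp_apply]
    have hlt : ((Fin.castLE hc (e.symm ⟨g j, hmem j⟩)) : ℕ) < s.card := by
      simpa using (e.symm ⟨g j, hmem j⟩).2
    rw [dif_pos hlt]
    have : (⟨((Fin.castLE hc (e.symm ⟨g j, hmem j⟩)) : ℕ), hlt⟩ : Fin s.card)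
        = e.symm ⟨g j, hmem j⟩ := by
      apply Fin.ext; simp
    rw [this]
    simp
  have hle := Finset.card_le_card_of_surjOn _ hsurj
  calc _ ≤ (Finset.univ : Finset ((Fin (2*k) → Fin k) × (Fin k → Fin n))).card := hle
    _ = k ^ (2*k) * n ^ k := by
        simp [Fintype.card_fun]

lemma moment_bound {n k : ℕ} (hk : 1 ≤ k) (Y : Fin n → Ω → ℝ)
    (hmeas : ∀ i, Measurable (Y i)) (hbd : ∀ i ω, |Y i ω| ≤ 1)
    (hmean : ∀ i, ∫ ω, Y i ω ∂P = 0)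
    (hindep : iIndepFun Y P) :
    ∫ ω, (∑ i, Y i ω) ^ (2 * k) ∂P ≤ (k : ℝ) ^ (2 * k) * (n : ℝ) ^ k := by
  classical
  set m := 2 * k with hm
  have hexp : ∀ ω, (∑ i, Y i ω) ^ m = ∑ g : Fin m → Fin n, ∏ i, (Y i ω) ^ (fibcard g i) := by
    intro ω
    rw [show (∑ i, Y i ω) = ∑ i, (fun i => Y i ω) i from rfl, Fintype.sum_pow]
    exact Finset.sum_congr rfl (fun g _ => prod_comp_univ (fun i => Y i ω) g)
  have hWmeas : ∀ (g : Fin m → Fin n) i, Measurable (fun ω => (Y i ω) ^ (fibcard g i)) :=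
    fun g i => (hmeas i).pow_const _
  have hWbd : ∀ (g : Fin m → Fin n) i ω, |(Y i ω) ^ (fibcard g i)| ≤ 1 := by
    intro g i ω
    rw [abs_pow]
    exact pow_le_one₀ (abs_nonneg _) (hbd i ω)
  have hWindep : ∀ g : Fin m → Fin n,
      iIndepFun (fun i => fun ω => (Y i ω) ^ (fibcard g i)) P :=
    fun g => hindep.comp (fun i t => t ^ (fibcard g i)) (fun i => measurable_id.pow_const _)
  have hval : ∀ g : Fin m → Fin n,
      ∫ ω, ∏ i, (Y i ω) ^ (fibcard g i) ∂P = ∏ i, ∫ ω, (Y i ω) ^ (fibcard g i) ∂P :=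
    fun g => integral_prod_indep _ (hWmeas g) (hWbd g) (hWindep g) Finset.univ
  have hint : ∀ g : Fin m → Fin n, Integrable (fun ω => ∏ i, (Y i ω) ^ (fibcard g i)) P := by
    intro g
    refine integrable_of_abs_le (Finset.measurable_prod _ fun i _ => hWmeas g i) (c := 1) ?_
    intro ω
    rw [Finset.abs_prod]
    exact Finset.prod_le_one (fun i _ => abs_nonneg _) fun i _ => hWbd g i ω
  have habs : ∀ (g : Fin m → Fin n) (i : Fin n), |∫ ω, (Y i ω) ^ (fibcard g i) ∂P| ≤ 1 := by
    intro g i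
    have h1 : |∫ ω, (Y i ω) ^ (fibcard g i) ∂P| ≤ ∫ ω, |(Y i ω) ^ (fibcard g i)| ∂P := by
      simpa [Real.norm_eq_abs] using
        norm_integral_le_integral_norm (μ := P) (fun ω => (Y i ω) ^ (fibcard g i))
    have h2 : ∫ ω, |(Y i ω) ^ (fibcard g i)| ∂P ≤ ∫ (_ : Ω), (1 : ℝ) ∂P := by
      refine integral_mono ((integrable_of_abs_le (hWmeas g i) (hWbd g i)).abs)
        (integrable_const 1) ?_
      intro ω; exact hWbd g i ω
    have h3 : ∫ (_ : Ω), (1 : ℝ) ∂P = 1 := by simp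
    linarith
  have hterm : ∀ g : Fin m → Fin n,
      ∫ ω, ∏ i, (Y i ω) ^ (fibcard g i) ∂P ≤ if (∀ i, fibcard g i ≠ 1) then 1 else 0 := by
    intro g
    rw [hval g]
    by_cases hg : ∀ i, fibcard g i ≠ 1
    · rw [if_pos hg]
      calc ∏ i, ∫ ω, (Y i ω) ^ (fibcard g i) ∂P
          ≤ |∏ i, ∫ ω, (Y i ω) ^ (fibcard g i) ∂P| := le_abs_self _
        _ = ∏ i, |∫ ω, (Y i ω) ^ (fibcard g i) ∂P| := Finset.abs_prod _ _
        _ ≤ 1 := Finset.prod_le_one (fun i _ => abs_nonneg _) fun i _ => habs g i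
    · rw [if_neg hg]
      push_neg at hg
      obtain ⟨i, hi⟩ := hg
      refine le_of_eq (Finset.prod_eq_zero (Finset.mem_univ i) ?_)
      rw [hi]
      simp only [pow_one]
      exact hmean i
  calc ∫ ω, (∑ i, Y i ω) ^ m ∂P
      = ∑ g : Fin m → Fin n, ∫ ω, ∏ i, (Y i ω) ^ (fibcard g i) ∂P := by
        rw [← integral_finset_sum _ (fun g _ => hint g)]
        exact integral_congr_ae (Filter.Eventually.of_forall fun ω => by
          simpa using hexp ω)
    _ ≤ ∑ g : Fin m → Fin n, (if (∀ i, fibcard g i ≠ 1) then (1:ℝ) else 0) :=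
        Finset.sum_le_sum fun g _ => hterm g
    _ = ((Finset.univ.filter (fun g : Fin m → Fin n => ∀ i, fibcard g i ≠ 1)).card : ℝ) := by
        rw [Finset.sum_boole]
    _ ≤ ((k ^ (2*k) * n ^ k : ℕ) : ℝ) := by
        exact_mod_cast Nat.cast_le.mpr (count_bound n k hk)
    _ = (k : ℝ) ^ (2*k) * (n : ℝ) ^ k := by push_cast; ring

lemma cdf_diff_bound {n k : ℕ} (hn : 1 ≤ n) (hk : 1 ≤ k) {p : ℝ} (hp : 1 ≤ p)
    (hpk : p ≤ 2 * k)
    (Z : Ω → ℝ) (Y : Fin n → Ω → ℝ)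
    (hZ : ∀ ω, Z ω = (1 / n) * ∑ i, Y i ω)
    (hZbd : ∀ ω, |Z ω| ≤ 1)
    (hmeas : ∀ i, Measurable (Y i)) (hbd : ∀ i ω, |Y i ω| ≤ 1)
    (hmean : ∀ i, ∫ ω, Y i ω ∂P = 0)
    (hindep : iIndepFun Y P) :
    ∫⁻ ω, ENNReal.ofReal (|Z ω| ^ p) ∂P
      ≤ ENNReal.ofReal ((((k:ℝ) ^ (2*k) + 1)) * (n:ℝ) ^ (-(p/2))) := by
  have hN : (0:ℝ) < n := by exact_mod_cast hn
  set N := (n : ℝ) with hNdef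
  set A : ℝ := N ^ ((2*(k:ℝ) - p)/2) with hA
  set B : ℝ := N ^ (-(p/2)) with hB
  have hA0 : 0 ≤ A := Real.rpow_nonneg hN.le _
  have hB0 : 0 ≤ B := Real.rpow_nonneg hN.le _
  have heven : Even (2*k) := ⟨k, by ring⟩
  have hZmeas : Measurable Z := by
    have : Measurable fun ω => (1 / (n:ℝ)) * ∑ i, Y i ω :=
      (Finset.measurable_sum _ fun i _ => hmeas i).const_mul _
    exact (funext hZ : Z = _) ▸ this
  -- pointwise bound
  have hpt : ∀ ω, |Z ω| ^ p ≤ A * (Z ω) ^ (2*k) + B := by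
    intro ω
    set t := |Z ω| with ht
    have ht0 : 0 ≤ t := abs_nonneg _
    have hZpow : 0 ≤ (Z ω) ^ (2*k) := heven.pow_nonneg _
    have hs0 : (0:ℝ) < N ^ (-(1/2) : ℝ) := Real.rpow_pos_of_pos hN _
    rcases le_or_gt t (N ^ (-(1/2) : ℝ)) with hts | hts
    · have h1 : t ^ p ≤ (N ^ (-(1/2) : ℝ)) ^ p := Real.rpow_le_rpow ht0 hts (by linarith)
      have h2 : (N ^ (-(1/2) : ℝ)) ^ p = B := by
        rw [hB, ← Real.rpow_mul hN.le]
        norm_num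
        ring_nf
      nlinarith [mul_nonneg hA0 hZpow]
    · have htpos : 0 < t := lt_trans hs0 hts
      have h1 : t ^ p = t ^ ((2*k : ℕ) : ℝ) * t ^ (p - (2*k : ℕ)) := by
        rw [← Real.rpow_add htpos]
        ring_nf
      have h2 : t ^ (p - ((2*k : ℕ) : ℝ)) ≤ (N ^ (-(1/2) : ℝ)) ^ (p - ((2*k : ℕ) : ℝ)) := by
        apply Real.rpow_le_rpow_of_nonpos hs0 hts.le
        push_cast
        linarith
      have h3 : (N ^ (-(1/2) : ℝ)) ^ (p - ((2*k : ℕ) : ℝ)) = A := by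
        rw [hA, ← Real.rpow_mul hN.le]
        push_cast
        ring_nf
      have h4 : t ^ ((2*k : ℕ) : ℝ) = (Z ω) ^ (2*k) := by
        rw [Real.rpow_natCast, ht, heven.pow_abs]
      have h5 : t ^ p ≤ A * (Z ω) ^ (2*k) := by
        calc t ^ p = (Z ω) ^ (2*k) * t ^ (p - ((2*k:ℕ):ℝ)) := by rw [h1, h4]
          _ ≤ (Z ω) ^ (2*k) * A := by
              apply mul_le_mul_of_nonneg_left _ hZpow
              rw [← h3]; exact h2
          _ = A * (Z ω) ^ (2*k) := mul_comm _ _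
      linarith
  -- integrate
  have hZint : Integrable (fun ω => (Z ω) ^ (2*k)) P := by
    refine integrable_of_abs_le (hZmeas.pow_const _) (c := 1) fun ω => ?_
    rw [abs_pow]
    exact pow_le_one₀ (abs_nonneg _) (hZbd ω)
  have step1 : ∫⁻ ω, ENNReal.ofReal (|Z ω| ^ p) ∂P
      ≤ ENNReal.ofReal A * ∫⁻ ω, ENNReal.ofReal ((Z ω) ^ (2*k)) ∂P + ENNReal.ofReal B := by
    calc ∫⁻ ω, ENNReal.ofReal (|Z ω| ^ p) ∂P
        ≤ ∫⁻ ω, (ENNReal.ofReal (A * (Z ω) ^ (2*k)) + ENNReal.ofReal B) ∂P := by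
          refine lintegral_mono fun ω => ?_
          calc ENNReal.ofReal (|Z ω| ^ p) ≤ ENNReal.ofReal (A * (Z ω) ^ (2*k) + B) :=
              ENNReal.ofReal_le_ofReal (hpt ω)
            _ ≤ _ := ENNReal.ofReal_add_le
      _ = ∫⁻ ω, ENNReal.ofReal (A * (Z ω) ^ (2*k)) ∂P + ENNReal.ofReal B := by
          rw [lintegral_add_right _ measurable_const]
          simp
      _ = ENNReal.ofReal A * ∫⁻ ω, ENNReal.ofReal ((Z ω) ^ (2*k)) ∂P + ENNReal.ofReal B := by
          congr 1
          rw [← lintegral_const_mul' _ _ ENNReal.ofReal_ne_top]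
          congr 1
          funext ω
          rw [ENNReal.ofReal_mul hA0]
  have hZval : ∫⁻ ω, ENNReal.ofReal ((Z ω) ^ (2*k)) ∂P
      = ENNReal.ofReal (∫ ω, (Z ω) ^ (2*k) ∂P) :=
    (ofReal_integral_eq_lintegral_ofReal hZint
      (Filter.Eventually.of_forall fun ω => heven.pow_nonneg _)).symm
  have hZmom : ∫ ω, (Z ω) ^ (2*k) ∂P ≤ (1/N) ^ (2*k) * ((k:ℝ) ^ (2*k) * N ^ k) := by
    have h1 : ∀ ω, (Z ω) ^ (2*k) = (1/N) ^ (2*k) * (∑ i, Y i ω) ^ (2*k) := by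
      intro ω; rw [hZ ω, mul_pow]
    calc ∫ ω, (Z ω) ^ (2*k) ∂P = (1/N) ^ (2*k) * ∫ ω, (∑ i, Y i ω) ^ (2*k) ∂P := by
          simp_rw [h1]
          exact integral_const_mul _ _
      _ ≤ (1/N) ^ (2*k) * ((k:ℝ) ^ (2*k) * N ^ k) := by
          apply mul_le_mul_of_nonneg_left _ (by positivity)
          simpa using moment_bound hk Y hmeas hbd hmean hindep
  -- arithmetic
  have harith : A * ((1/N) ^ (2*k) * ((k:ℝ) ^ (2*k) * N ^ k)) = (k:ℝ) ^ (2*k) * B := by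
    have e1 : ((1:ℝ)/N) ^ (2*k) = N ^ (-(2*(k:ℝ))) := by
      rw [one_div, ← Real.rpow_natCast N⁻¹ (2*k), Real.inv_rpow hN.le, ← Real.rpow_neg hN.le]
      push_cast
      ring_nf
    have e2 : (N:ℝ) ^ k = N ^ ((k:ℝ)) := (Real.rpow_natCast N k).symm
    rw [e1, e2, hA, hB]
    calc N ^ ((2*(k:ℝ) - p)/2) * (N ^ (-(2*(k:ℝ))) * ((k:ℝ) ^ (2*k) * N ^ ((k:ℝ))))
        = (k:ℝ) ^ (2*k) * (N ^ ((2*(k:ℝ) - p)/2) * N ^ (-(2*(k:ℝ))) * N ^ ((k:ℝ))) := by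
          ring
      _ = (k:ℝ) ^ (2*k) * N ^ ((2*(k:ℝ) - p)/2 + -(2*(k:ℝ)) + (k:ℝ)) := by
          rw [← Real.rpow_add hN, ← Real.rpow_add hN]
      _ = (k:ℝ) ^ (2*k) * N ^ (-(p/2)) := by
          rw [show (2*(k:ℝ) - p)/2 + -(2*(k:ℝ)) + (k:ℝ) = -(p/2) from by ring]
  calc ∫⁻ ω, ENNReal.ofReal (|Z ω| ^ p) ∂P
      ≤ ENNReal.ofReal A * ∫⁻ ω, ENNReal.ofReal ((Z ω) ^ (2*k)) ∂P + ENNReal.ofReal B := step1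
    _ = ENNReal.ofReal A * ENNReal.ofReal (∫ ω, (Z ω) ^ (2*k) ∂P) + ENNReal.ofReal B := by
        rw [hZval]
    _ ≤ ENNReal.ofReal A * ENNReal.ofReal ((1/N) ^ (2*k) * ((k:ℝ) ^ (2*k) * N ^ k))
          + ENNReal.ofReal B := by
        have := ENNReal.ofReal_le_ofReal hZmom
        exact add_le_add_left (mul_le_mul_right this _) _
    _ = ENNReal.ofReal (A * ((1/N) ^ (2*k) * ((k:ℝ) ^ (2*k) * N ^ k))) + ENNReal.ofReal B := by
        rw [ENNReal.ofReal_mul hA0]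
    _ = ENNReal.ofReal ((k:ℝ) ^ (2*k) * B) + ENNReal.ofReal B := by rw [harith]
    _ = ENNReal.ofReal ((k:ℝ) ^ (2*k) * B + B) := by
        rw [ENNReal.ofReal_add (by positivity) hB0]
    _ = ENNReal.ofReal ((((k:ℝ) ^ (2*k) + 1)) * (n:ℝ) ^ (-(p/2))) := by
        rw [hB]
        congr 1
        ring


lemma two_rpow_add_le {a c p : ℝ} (ha : 0 ≤ a) (hc : 0 ≤ c) (hp : 0 ≤ p) :
    (a + c) ^ p ≤ 2 ^ p * (a ^ p + c ^ p) := by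
  have h2 : (0:ℝ) ≤ 2 ^ p := Real.rpow_nonneg (by norm_num) _
  rcases le_total a c with h | h
  · calc (a + c) ^ p ≤ (2 * c) ^ p :=
        Real.rpow_le_rpow (by linarith) (by linarith) hp
      _ = 2 ^ p * c ^ p := Real.mul_rpow (by norm_num) hc
      _ ≤ 2 ^ p * (a ^ p + c ^ p) :=
        mul_le_mul_of_nonneg_left (le_add_of_nonneg_left (Real.rpow_nonneg ha _)) h2
  · calc (a + c) ^ p ≤ (2 * a) ^ p :=
        Real.rpow_le_rpow (by linarith) (by linarith) hp
      _ = 2 ^ p * a ^ p := Real.mul_rpow (by norm_num) ha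
      _ ≤ 2 ^ p * (a ^ p + c ^ p) :=
        mul_le_mul_of_nonneg_left (le_add_of_nonneg_right (Real.rpow_nonneg hc _)) h2

end Stmt5Aux

open Stmt5Aux

/-- Risk transfer for the plug-in estimator `ĝ = w(F̂)·f̂` of `g = w(F)·f`: if the common
density `f` satisfies `0 ≤ f ≤ C₁` on `[−b,b]` and `w` is `C₂`-Lipschitz on `[0,1]`, then
for every `p ≥ 1` there is `C > 0`, depending only on `p`, `b`, `C₁`, `C₂` and `|w 0|`,
with `E(∫_{−b}^{b} |ĝ − g|^p) ≤ C (E(∫_{−b}^{b} |f̂ − f|^p) + n^{−p/2})`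
(expectations and integrals in the extended sense). -/
theorem stmt5 (p b C₁ C₂ W₀ : ℝ) (hp : 1 ≤ p) (hb : 0 < b) (hC₁ : 0 < C₁) (hC₂ : 0 < C₂) :
    ∃ C > (0 : ℝ),
      ∀ (w : ℝ → ℝ)
        (_hlip : ∀ u ∈ Set.Icc (0 : ℝ) 1, ∀ v ∈ Set.Icc (0 : ℝ) 1,
          |w u - w v| ≤ C₂ * |u - v|)
        (_hw0 : |w 0| = W₀)
        (Ω : Type) (_mΩ : MeasurableSpace Ω) (P : Measure Ω)
        (_hP : IsProbabilityMeasure P)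
        (n : ℕ) (hn : 1 ≤ n)
        (X : Fin n → Ω → ℝ)
        (_hmeas : ∀ i, Measurable (X i))
        (_hindep : iIndepFun X P)
        (f : ℝ → ℝ)
        (_hdens : ∀ i, Measure.map (X i) P
            = volume.withDensity (fun x => ENNReal.ofReal (f x)))
        (_hfbd : ∀ x ∈ Set.Icc (-b) b, 0 ≤ f x ∧ f x ≤ C₁)
        (F : ℝ → ℝ) (_hF : ∀ x, F x = (P {ω | X ⟨0, hn⟩ ω ≤ x}).toReal)
        (Fhat : Ω → ℝ → ℝ)
        (_hFhat : ∀ ω x, Fhat ω x = (1 / (n : ℝ)) * ∑ i, (if X i ω ≤ x then (1 : ℝ) else 0))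
        (fhat : Ω → ℝ → ℝ)
        (_hfhatmeas : Measurable (Function.uncurry fhat)),
        (∫⁻ ω, (∫⁻ x in Set.Icc (-b) b,
            ENNReal.ofReal (|w (Fhat ω x) * fhat ω x - w (F x) * f x| ^ p)) ∂P) ≤
          ENNReal.ofReal C *
            ((∫⁻ ω, (∫⁻ x in Set.Icc (-b) b,
                ENNReal.ofReal (|fhat ω x - f x| ^ p)) ∂P) +
              ENNReal.ofReal ((n : ℝ) ^ (-(p / 2)))) := by
  classical
  set k := ⌈p⌉₊ with hkdef
  have hk : 1 ≤ k := Nat.one_le_iff_ne_zero.mpr (by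
    have : (0:ℝ) < p := by linarith
    simpa [hkdef] using (Nat.ceil_pos.mpr this).ne')
  have hpk : p ≤ 2 * k := by
    have h1 := Nat.le_ceil p
    have h2 : (⌈p⌉₊ : ℝ) ≤ 2 * (⌈p⌉₊ : ℝ) := by
      have : (0:ℝ) ≤ (⌈p⌉₊ : ℝ) := Nat.cast_nonneg _
      linarith
    push_cast
    exact le_trans h1 h2
  set M : ℝ := (k:ℝ) ^ (2*k) + 1 with hM
  have hM0 : 0 < M := by positivity
  set K1 : ℝ := |W₀| + C₂ with hK1def
  set K2 : ℝ := C₂ * C₁ with hK2def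
  have hK1 : 0 < K1 := add_pos_of_nonneg_of_pos (abs_nonneg _) hC₂
  have hK2 : 0 < K2 := mul_pos hC₂ hC₁
  set A0 : ℝ := 2 ^ p * K1 ^ p with hA0def
  set B0 : ℝ := 2 ^ p * K2 ^ p with hB0def
  have hA0 : 0 < A0 := mul_pos (Real.rpow_pos_of_pos (by norm_num) _) (Real.rpow_pos_of_pos hK1 _)
  have hB0 : 0 < B0 := mul_pos (Real.rpow_pos_of_pos (by norm_num) _) (Real.rpow_pos_of_pos hK2 _)
  have hbM : 0 < 2 * b * M := by positivity
  refine ⟨A0 + B0 * (2 * b * M) + 1, by nlinarith, ?_⟩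
  intro w hlip hw0 Ω mΩ P hP n hn X hmeas hindep f hdens hfbd F hF Fhat hFhat fhat hfhatmeas
  have hNpos : (0:ℝ) < n := by exact_mod_cast hn
  -- CDF facts
  have hF01 : ∀ x, 0 ≤ F x ∧ F x ≤ 1 := by
    intro x
    rw [hF x]
    refine ⟨ENNReal.toReal_nonneg, ?_⟩
    have h := prob_le_one (μ := P) (s := {ω | X ⟨0, hn⟩ ω ≤ x})
    calc (P {ω | X ⟨0, hn⟩ ω ≤ x}).toReal ≤ (1 : ENNReal).toReal :=
        ENNReal.toReal_mono (by simp) h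
      _ = 1 := by simp
  have hFmeas : Measurable F := by
    have hmono : Monotone F := by
      intro x y hxy
      rw [hF x, hF y]
      exact ENNReal.toReal_mono (measure_ne_top P _)
        (measure_mono (fun ω h => le_trans h hxy))
    exact hmono.measurable
  -- empirical CDF, explicit form
  set G : Ω → ℝ → ℝ :=
    fun ω x => (1 / (n : ℝ)) * ∑ i, (if X i ω ≤ x then (1 : ℝ) else 0) with hG
  have hFhatG : ∀ ω x, Fhat ω x = G ω x := fun ω x => hFhat ω x
  have hG01 : ∀ ω x, 0 ≤ G ω x ∧ G ω x ≤ 1 := by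
    intro ω x
    have h0 : (0:ℝ) ≤ ∑ i, (if X i ω ≤ x then (1:ℝ) else 0) :=
      Finset.sum_nonneg fun i _ => by split <;> norm_num
    have h1 : ∑ i, (if X i ω ≤ x then (1:ℝ) else 0) ≤ (n:ℝ) := by
      calc ∑ i, (if X i ω ≤ x then (1:ℝ) else 0) ≤ ∑ _i : Fin n, (1:ℝ) :=
          Finset.sum_le_sum fun i _ => by split <;> norm_num
        _ = n := by simp
    constructor
    · exact mul_nonneg (by positivity) h0
    · calc (1/(n:ℝ)) * ∑ i, (if X i ω ≤ x then (1:ℝ) else 0) ≤ (1/(n:ℝ)) * n :=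
          mul_le_mul_of_nonneg_left h1 (by positivity)
        _ = 1 := by field_simp
  have hGx : ∀ ω, Measurable (fun x => G ω x) := by
    intro ω
    apply Measurable.const_mul
    apply Finset.measurable_sum
    intro i _
    exact Measurable.ite measurableSet_Ici measurable_const measurable_const
  have hGmeas : Measurable (fun q : Ω × ℝ => G q.1 q.2) := by
    apply Measurable.const_mul
    apply Finset.measurable_sum
    intro i _
    have hset : MeasurableSet {q : Ω × ℝ | X i q.1 ≤ q.2} :=
      measurableSet_le ((hmeas i).comp measurable_fst) measurable_snd
    exact Measurable.ite hset measurable_const measurable_const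
  have hrpowm : Measurable (fun t : ℝ => t ^ p) :=
    (Real.continuous_rpow_const (by linarith)).measurable
  have hVmeas_xy : Measurable (fun q : Ω × ℝ => ENNReal.ofReal (|G q.1 q.2 - F q.2| ^ p)) :=
    ENNReal.measurable_ofReal.comp
      (hrpowm.comp ((hGmeas.sub (hFmeas.comp measurable_snd)).abs))
  set V : Ω → ENNReal :=
    fun ω => ∫⁻ x in Set.Icc (-b) b, ENNReal.ofReal (|G ω x - F x| ^ p) with hV
  have hVmeas : Measurable V := Measurable.lintegral_prod_right hVmeas_xy
  -- per-x moment bound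
  have hXbound : ∀ x : ℝ, ∫⁻ ω, ENNReal.ofReal (|G ω x - F x| ^ p) ∂P
      ≤ ENNReal.ofReal (M * (n:ℝ) ^ (-(p/2))) := by
    intro x
    set Y : Fin n → Ω → ℝ := fun i ω => (if X i ω ≤ x then (1:ℝ) else 0) - F x with hY
    have hYmeas : ∀ i, Measurable (Y i) := fun i =>
      (Measurable.ite ((hmeas i) measurableSet_Iic) measurable_const measurable_const).sub
        measurable_const
    have hYbd : ∀ i ω, |Y i ω| ≤ 1 := by
      intro i ω
      have h := hF01 x
      rw [hY]
      simp only
      rcases le_or_gt (X i ω) x with hc | hc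
      · rw [if_pos hc, abs_le]
        constructor <;> linarith
      · rw [if_neg (not_le.mpr hc), abs_le]
        constructor <;> linarith
    have hYindep : iIndepFun Y P := by
      have hphi : Measurable (fun t : ℝ => (if t ≤ x then (1:ℝ) else 0) - F x) :=
        (Measurable.ite measurableSet_Iic measurable_const measurable_const).sub measurable_const
      exact hindep.comp (fun _ => fun t => (if t ≤ x then (1:ℝ) else 0) - F x) (fun _ => hphi)
    have hPeq : ∀ i, P {ω | X i ω ≤ x} = P {ω | X ⟨0, hn⟩ ω ≤ x} := by
      intro i
      have h1 : P {ω | X i ω ≤ x} = (Measure.map (X i) P) (Set.Iic x) := by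
        rw [Measure.map_apply (hmeas i) measurableSet_Iic]; rfl
      have h2 : P {ω | X ⟨0, hn⟩ ω ≤ x} = (Measure.map (X ⟨0, hn⟩) P) (Set.Iic x) := by
        rw [Measure.map_apply (hmeas _) measurableSet_Iic]; rfl
      rw [h1, h2, hdens i, hdens ⟨0, hn⟩]
    have hmean : ∀ i, ∫ ω, Y i ω ∂P = 0 := by
      intro i
      have hindic : (fun ω => if X i ω ≤ x then (1:ℝ) else 0)
          = Set.indicator {ω | X i ω ≤ x} (fun _ => (1:ℝ)) := by
        funext ω
        by_cases h : X i ω ≤ x <;> simp [Set.indicator_apply, h]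
      have hind : ∫ ω, (if X i ω ≤ x then (1:ℝ) else 0) ∂P = (P {ω | X i ω ≤ x}).toReal := by
        rw [hindic, integral_indicator_const (1:ℝ)
          (show MeasurableSet {ω | X i ω ≤ x} from (hmeas i) measurableSet_Iic)]
        simp [measureReal_def]
      have hintind : Integrable (fun ω => if X i ω ≤ x then (1:ℝ) else 0) P := by
        rw [hindic]
        exact (integrable_const (1:ℝ)).indicator ((hmeas i) measurableSet_Iic)
      have heval : ∫ ω, Y i ω ∂P = (P {ω | X i ω ≤ x}).toReal - F x := by
        rw [hY]
        simp only
        rw [integral_sub hintind (integrable_const _), hind, integral_const]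
        simp
      rw [heval, hPeq i, ← hF x, sub_self]
    have hZeq : ∀ ω, G ω x - F x = (1/(n:ℝ)) * ∑ i, Y i ω := by
      intro ω
      rw [hY, hG]
      simp only
      rw [Finset.sum_sub_distrib, Finset.sum_const, Finset.card_univ, Fintype.card_fin,
        nsmul_eq_mul]
      field_simp
      try ring
    have hZbd : ∀ ω, |G ω x - F x| ≤ 1 := by
      intro ω
      have h1 := hG01 ω x
      have h2 := hF01 x
      rw [abs_le]
      constructor <;> linarith
    have hfinal := cdf_diff_bound (P := P) hn hk hp hpk (fun ω => G ω x - F x) Y hZeq hZbd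
      hYmeas hYbd hmean hYindep
    simpa [hM] using hfinal
  -- pointwise main decomposition
  have hmain_pt : ∀ ω, ∀ x ∈ Set.Icc (-b) b,
      ENNReal.ofReal (|w (G ω x) * fhat ω x - w (F x) * f x| ^ p)
        ≤ ENNReal.ofReal A0 * ENNReal.ofReal (|fhat ω x - f x| ^ p)
          + ENNReal.ofReal B0 * ENNReal.ofReal (|G ω x - F x| ^ p) := by
    intro ω x hx
    have hG01' := hG01 ω x
    have hF01' := hF01 x
    have hfb := hfbd x hx
    have hwG : |w (G ω x)| ≤ K1 := by
      have h := hlip (G ω x) ⟨hG01'.1, hG01'.2⟩ 0 (by norm_num)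
      have habs : |G ω x - 0| ≤ 1 := by
        rw [sub_zero, abs_le]
        exact ⟨by linarith [hG01'.1], hG01'.2⟩
      have htr : |w (G ω x)| ≤ |w (G ω x) - w 0| + |w 0| := by
        calc |w (G ω x)| = |(w (G ω x) - w 0) + w 0| := by ring_nf
          _ ≤ |w (G ω x) - w 0| + |w 0| := abs_add_le _ _
      have hW : |w 0| ≤ |W₀| := by rw [hw0]; exact le_abs_self _
      have hC2 : C₂ * |G ω x - 0| ≤ C₂ * 1 := mul_le_mul_of_nonneg_left habs hC₂.le
      rw [hK1def]
      linarith
    have hlipGF : |w (G ω x) - w (F x)| ≤ C₂ * |G ω x - F x| :=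
      hlip (G ω x) ⟨hG01'.1, hG01'.2⟩ (F x) ⟨hF01'.1, hF01'.2⟩
    have hfabs : |f x| ≤ C₁ := by rw [abs_of_nonneg hfb.1]; exact hfb.2
    have hD : |w (G ω x) * fhat ω x - w (F x) * f x|
        ≤ K1 * |fhat ω x - f x| + K2 * |G ω x - F x| := by
      have e : w (G ω x) * fhat ω x - w (F x) * f x
          = w (G ω x) * (fhat ω x - f x) + (w (G ω x) - w (F x)) * f x := by ring
      rw [e]
      calc |w (G ω x) * (fhat ω x - f x) + (w (G ω x) - w (F x)) * f x|
          ≤ |w (G ω x) * (fhat ω x - f x)| + |(w (G ω x) - w (F x)) * f x| := abs_add_le _ _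
        _ = |w (G ω x)| * |fhat ω x - f x| + |w (G ω x) - w (F x)| * |f x| := by
            rw [abs_mul, abs_mul]
        _ ≤ K1 * |fhat ω x - f x| + (C₂ * |G ω x - F x|) * C₁ := by
            apply add_le_add
            · exact mul_le_mul_of_nonneg_right hwG (abs_nonneg _)
            · exact mul_le_mul hlipGF hfabs (abs_nonneg _)
                (mul_nonneg hC₂.le (abs_nonneg _))
        _ = K1 * |fhat ω x - f x| + K2 * |G ω x - F x| := by rw [hK2def]; ring
    have hDp : |w (G ω x) * fhat ω x - w (F x) * f x| ^ p
        ≤ A0 * |fhat ω x - f x| ^ p + B0 * |G ω x - F x| ^ p := by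
      calc |w (G ω x) * fhat ω x - w (F x) * f x| ^ p
          ≤ (K1 * |fhat ω x - f x| + K2 * |G ω x - F x|) ^ p :=
            Real.rpow_le_rpow (abs_nonneg _) hD (by linarith)
        _ ≤ 2 ^ p * ((K1 * |fhat ω x - f x|) ^ p + (K2 * |G ω x - F x|) ^ p) :=
            two_rpow_add_le (mul_nonneg hK1.le (abs_nonneg _))
              (mul_nonneg hK2.le (abs_nonneg _)) (by linarith)
        _ = A0 * |fhat ω x - f x| ^ p + B0 * |G ω x - F x| ^ p := by
            rw [Real.mul_rpow hK1.le (abs_nonneg _), Real.mul_rpow hK2.le (abs_nonneg _),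
              hA0def, hB0def]
            ring
    calc ENNReal.ofReal (|w (G ω x) * fhat ω x - w (F x) * f x| ^ p)
        ≤ ENNReal.ofReal (A0 * |fhat ω x - f x| ^ p + B0 * |G ω x - F x| ^ p) :=
          ENNReal.ofReal_le_ofReal hDp
      _ ≤ ENNReal.ofReal (A0 * |fhat ω x - f x| ^ p)
            + ENNReal.ofReal (B0 * |G ω x - F x| ^ p) := ENNReal.ofReal_add_le
      _ = ENNReal.ofReal A0 * ENNReal.ofReal (|fhat ω x - f x| ^ p)
            + ENNReal.ofReal B0 * ENNReal.ofReal (|G ω x - F x| ^ p) := by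
          rw [ENNReal.ofReal_mul hA0.le, ENNReal.ofReal_mul hB0.le]
  -- inner integral bound
  set U : Ω → ENNReal :=
    fun ω => ∫⁻ x in Set.Icc (-b) b, ENNReal.ofReal (|fhat ω x - f x| ^ p) with hU
  have hUmeas_x : ∀ ω, Measurable (fun x => ENNReal.ofReal (|G ω x - F x| ^ p)) := fun ω =>
    ENNReal.measurable_ofReal.comp (hrpowm.comp (((hGx ω).sub hFmeas).abs))
  have hinner : ∀ ω,
      (∫⁻ x in Set.Icc (-b) b,
        ENNReal.ofReal (|w (G ω x) * fhat ω x - w (F x) * f x| ^ p))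
      ≤ ENNReal.ofReal A0 * U ω + ENNReal.ofReal B0 * V ω := by
    intro ω
    calc (∫⁻ x in Set.Icc (-b) b,
          ENNReal.ofReal (|w (G ω x) * fhat ω x - w (F x) * f x| ^ p))
        ≤ ∫⁻ x in Set.Icc (-b) b,
            (ENNReal.ofReal A0 * ENNReal.ofReal (|fhat ω x - f x| ^ p)
              + ENNReal.ofReal B0 * ENNReal.ofReal (|G ω x - F x| ^ p)) := by
          refine lintegral_mono_ae ?_
          exact (ae_restrict_iff' measurableSet_Icc).2
            (Filter.Eventually.of_forall fun x hx => hmain_pt ω x hx)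
      _ = (∫⁻ x in Set.Icc (-b) b, ENNReal.ofReal A0 * ENNReal.ofReal (|fhat ω x - f x| ^ p))
            + ∫⁻ x in Set.Icc (-b) b,
                ENNReal.ofReal B0 * ENNReal.ofReal (|G ω x - F x| ^ p) :=
          lintegral_add_right _ ((hUmeas_x ω).const_mul _)
      _ = ENNReal.ofReal A0 * U ω + ENNReal.ofReal B0 * V ω := by
          rw [lintegral_const_mul' _ _ ENNReal.ofReal_ne_top,
            lintegral_const_mul' _ _ ENNReal.ofReal_ne_top, hU, hV]
  -- T2 bound
  have hT2 : ∫⁻ ω, V ω ∂P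
      ≤ ENNReal.ofReal (2*b*M) * ENNReal.ofReal ((n:ℝ) ^ (-(p/2))) := by
    have hswap : ∫⁻ ω, V ω ∂P
        = ∫⁻ x in Set.Icc (-b) b, ∫⁻ ω, ENNReal.ofReal (|G ω x - F x| ^ p) ∂P := by
      rw [hV]
      exact lintegral_lintegral_swap hVmeas_xy.aemeasurable
    rw [hswap]
    calc (∫⁻ x in Set.Icc (-b) b, ∫⁻ ω, ENNReal.ofReal (|G ω x - F x| ^ p) ∂P)
        ≤ ∫⁻ _x in Set.Icc (-b) b, ENNReal.ofReal (M * (n:ℝ) ^ (-(p/2))) :=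
          lintegral_mono fun x => hXbound x
      _ = ENNReal.ofReal (M * (n:ℝ) ^ (-(p/2))) * volume (Set.Icc (-b) b) :=
          setLIntegral_const _ _
      _ = ENNReal.ofReal (2*b*M) * ENNReal.ofReal ((n:ℝ) ^ (-(p/2))) := by
          rw [Real.volume_Icc, ← ENNReal.ofReal_mul
            (mul_nonneg hM0.le (Real.rpow_nonneg hNpos.le _)),
            ← ENNReal.ofReal_mul (by positivity)]
          congr 1
          ring
  -- outer assembly
  have hrw : (∫⁻ ω, (∫⁻ x in Set.Icc (-b) b,
      ENNReal.ofReal (|w (Fhat ω x) * fhat ω x - w (F x) * f x| ^ p)) ∂P)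
      = ∫⁻ ω, (∫⁻ x in Set.Icc (-b) b,
          ENNReal.ofReal (|w (G ω x) * fhat ω x - w (F x) * f x| ^ p)) ∂P := by
    simp_rw [hFhatG]
  rw [hrw]
  have houter : (∫⁻ ω, (∫⁻ x in Set.Icc (-b) b,
      ENNReal.ofReal (|w (G ω x) * fhat ω x - w (F x) * f x| ^ p)) ∂P)
      ≤ ENNReal.ofReal A0 * (∫⁻ ω, U ω ∂P) + ENNReal.ofReal B0 * (∫⁻ ω, V ω ∂P) := by
    calc (∫⁻ ω, (∫⁻ x in Set.Icc (-b) b,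
          ENNReal.ofReal (|w (G ω x) * fhat ω x - w (F x) * f x| ^ p)) ∂P)
        ≤ ∫⁻ ω, (ENNReal.ofReal A0 * U ω + ENNReal.ofReal B0 * V ω) ∂P :=
          lintegral_mono hinner
      _ = (∫⁻ ω, ENNReal.ofReal A0 * U ω ∂P) + ∫⁻ ω, ENNReal.ofReal B0 * V ω ∂P :=
          lintegral_add_right _ (hVmeas.const_mul _)
      _ = ENNReal.ofReal A0 * (∫⁻ ω, U ω ∂P) + ENNReal.ofReal B0 * (∫⁻ ω, V ω ∂P) := by
          rw [lintegral_const_mul' _ _ ENNReal.ofReal_ne_top,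
            lintegral_const_mul' _ _ ENNReal.ofReal_ne_top]
  have hAC : A0 ≤ A0 + B0 * (2*b*M) + 1 := by nlinarith
  have hBC : B0 * (2*b*M) ≤ A0 + B0 * (2*b*M) + 1 := by nlinarith
  calc (∫⁻ ω, (∫⁻ x in Set.Icc (-b) b,
        ENNReal.ofReal (|w (G ω x) * fhat ω x - w (F x) * f x| ^ p)) ∂P)
      ≤ ENNReal.ofReal A0 * (∫⁻ ω, U ω ∂P) + ENNReal.ofReal B0 * (∫⁻ ω, V ω ∂P) := houter
    _ ≤ ENNReal.ofReal A0 * (∫⁻ ω, U ω ∂P)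
          + ENNReal.ofReal B0 * (ENNReal.ofReal (2*b*M) * ENNReal.ofReal ((n:ℝ) ^ (-(p/2)))) := by
        exact add_le_add_right (mul_le_mul_right hT2 _) _
    _ = ENNReal.ofReal A0 * (∫⁻ ω, U ω ∂P)
          + ENNReal.ofReal (B0 * (2*b*M)) * ENNReal.ofReal ((n:ℝ) ^ (-(p/2))) := by
        rw [ENNReal.ofReal_mul hB0.le]
        ring
    _ ≤ ENNReal.ofReal (A0 + B0 * (2*b*M) + 1) * (∫⁻ ω, U ω ∂P)
          + ENNReal.ofReal (A0 + B0 * (2*b*M) + 1) * ENNReal.ofReal ((n:ℝ) ^ (-(p/2))) := by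
        exact add_le_add (mul_le_mul_left (ENNReal.ofReal_le_ofReal hAC) _)
          (mul_le_mul_left (ENNReal.ofReal_le_ofReal hBC) _)
    _ = ENNReal.ofReal (A0 + B0 * (2*b*M) + 1)
          * ((∫⁻ ω, U ω ∂P) + ENNReal.ofReal ((n:ℝ) ^ (-(p/2)))) := (mul_add _ _ _).symm
end
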